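/- Let g : ℝ → ℝ be of class C² with g, g', g'' bounded, and set Sg(x) = (g(x) − g(0))/x for x ≠ 0, Sg(0) = g'(0). Define y⁻(x, ε) = e^{x²/ε} ∫_{-∞}^x e^{-t²/ε} g(t) dt and U⁻(X) = e^{X²} ∫_{-∞}^X e^{-T²} dT. Then for every ε > 0 and every x ∈ ℝ, y⁻(x, ε) = g(0)·√ε·U⁻(x/√ε) − (ε/2)·Sg(x) + (ε/2)·e^{x²/ε} ∫_{-∞}^x e^{-t²/ε} (Sg)'(t) dt. -/

import Mathlib

/-!
Since `g t = g 0 + t * Sg t` and `t e^{-t²/ε} = -(ε/2) (e^{-t²/ε})'`, the integral of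
`e^{-t²/ε} g` splits into `g 0` times a Gaussian integral, which the substitution `t = √ε T`
turns into `√ε U⁻(x/√ε)`, plus an integral that one integration by parts on `(-∞, x)` turns into
the other two terms; the boundary term at `-∞` vanishes because `Sg` is bounded.
Boundedness of `Sg` and of `(Sg)'`, which also gives the integrability of every integrand, comes
from `Sg x = ∫₀¹ g'(s x) ds`, differentiated under the integral sign.
-/

open MeasureTheory

/-- `Sg(x) = (g(x) - g(0))/x` for `x ≠ 0`, `Sg(0) = g'(0)`. -/
noncomputable def Sop (g : ℝ → ℝ) (x : ℝ) : ℝ :=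
  if x = 0 then deriv g 0 else (g x - g 0) / x

open Real Set Filter Topology

theorem hasDerivAt_intervalIntegral_comp_mul {E : Type*} [NormedAddCommGroup E]
    [NormedSpace ℝ E] {f : ℝ → E} (hf : ContDiff ℝ 1 f) (a b x : ℝ) :
    HasDerivAt (fun y => ∫ s in a..b, f (s * y)) (∫ s in a..b, s • deriv f (s * x)) x := by
  obtain ⟨C, hC⟩ := (isCompact_uIcc.prod (isCompact_closedBall x 1)).exists_bound_of_continuousOn
    (f := fun p : ℝ × ℝ => p.1 • deriv f (p.1 * p.2)) (by fun_prop)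
  refine (intervalIntegral.hasDerivAt_integral_of_dominated_loc_of_deriv_le
    (F' := fun y s => s • deriv f (s * y)) (bound := fun _ => C)
    (Metric.ball_mem_nhds x one_pos) (.of_forall fun y => by fun_prop)
    ((hf.continuous.comp (by fun_prop)).intervalIntegrable _ _) (by fun_prop) ?_
    intervalIntegrable_const ?_).2
  · exact .of_forall fun s hs y hy =>
      hC (s, y) ⟨uIoc_subset_uIcc hs, Metric.ball_subset_closedBall hy⟩
  · refine .of_forall fun s _ y _ => ?_
    simpa [Function.comp_def] using (hf.differentiable one_ne_zero (s * y)).hasDerivAt.scomp y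
      ((hasDerivAt_id y).const_mul s)

theorem mul_Sop (g : ℝ → ℝ) (t : ℝ) : t * Sop g t = g t - g 0 := by
  rcases eq_or_ne t 0 with rfl | ht
  · simp
  · rw [Sop, if_neg ht]
    field_simp

section Sop

variable {g : ℝ → ℝ}

theorem Sop_eq_intervalIntegral (hg : ContDiff ℝ 1 g) (x : ℝ) :
    Sop g x = ∫ s in (0 : ℝ)..1, deriv g (s * x) := by
  rcases eq_or_ne x 0 with rfl | hx
  · simp [Sop]
  · rw [Sop, if_neg hx, intervalIntegral.integral_comp_mul_right (deriv g) hx,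
      intervalIntegral.integral_deriv_eq_sub (fun t _ => hg.differentiable one_ne_zero t)
        ((hg.continuous_deriv le_rfl).intervalIntegrable _ _)]
    simp [div_eq_inv_mul]

theorem hasDerivAt_Sop (hg : ContDiff ℝ 2 g) (x : ℝ) :
    HasDerivAt (Sop g) (∫ s in (0 : ℝ)..1, s * deriv (deriv g) (s * x)) x := by
  rw [funext (Sop_eq_intervalIntegral (hg.of_le one_le_two))]
  exact hasDerivAt_intervalIntegral_comp_mul hg.deriv' 0 1 x

theorem abs_Sop_le (hg : ContDiff ℝ 1 g) {M : ℝ} (hM : ∀ x, |deriv g x| ≤ M) (x : ℝ) :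
    |Sop g x| ≤ M := by
  simpa [Sop_eq_intervalIntegral hg] using
    intervalIntegral.norm_integral_le_of_norm_le_const (a := 0) (b := 1)
      (f := fun s => deriv g (s * x)) fun s _ => hM (s * x)

theorem abs_deriv_Sop_le (hg : ContDiff ℝ 2 g) {M : ℝ} (hM : ∀ x, |deriv (deriv g) x| ≤ M)
    (x : ℝ) : |deriv (Sop g) x| ≤ M := by
  rw [(hasDerivAt_Sop hg x).deriv]
  simpa using intervalIntegral.norm_integral_le_of_norm_le_const (a := 0) (b := 1)
    (f := fun s => s * deriv (deriv g) (s * x)) fun s hs => by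
      rw [uIoc_of_le zero_le_one] at hs
      rw [norm_mul, Real.norm_of_nonneg hs.1.le]
      exact (mul_le_of_le_one_left (abs_nonneg _) hs.2).trans (hM _)

end Sop

theorem integral_comp_mul_left_Iio {E : Type*} [NormedAddCommGroup E] [NormedSpace ℝ E]
    (f : ℝ → E) (a : ℝ) {b : ℝ} (hb : 0 < b) :
    ∫ x in Iio a, f (b * x) = b⁻¹ • ∫ x in Iio (b * a), f x := by
  rw [← integral_indicator measurableSet_Iio, ← integral_indicator measurableSet_Iio,
    ← abs_of_pos (inv_pos.mpr hb), ← Measure.integral_comp_mul_left]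
  congr 1
  ext1 x
  rw [← indicator_comp_right, preimage_const_mul_Iio₀ _ hb, mul_div_cancel_left₀ _ hb.ne',
    Function.comp_def]

section Gaussian

variable {ε : ℝ}

theorem hasDerivAt_neg_half_mul_exp_neg_sq_div (hε : ε ≠ 0) (t : ℝ) :
    HasDerivAt (fun t => -(ε / 2) * exp (-t ^ 2 / ε)) (t * exp (-t ^ 2 / ε)) t := by
  have h : HasDerivAt (fun t => -t ^ 2 / ε) (-(2 * t) / ε) t := by
    simpa using (hasDerivAt_pow 2 t).neg.div_const ε
  refine (h.exp.const_mul (-(ε / 2))).congr_deriv ?_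
  field_simp

theorem integrable_exp_neg_sq_div (hε : 0 < ε) : Integrable fun t : ℝ => exp (-t ^ 2 / ε) := by
  simpa [neg_div, div_eq_inv_mul] using integrable_exp_neg_mul_sq (inv_pos.mpr hε)

theorem integrable_id_mul_exp_neg_sq_div (hε : 0 < ε) :
    Integrable fun t : ℝ => t * exp (-t ^ 2 / ε) := by
  simpa [neg_div, div_eq_inv_mul] using integrable_mul_exp_neg_mul_sq (inv_pos.mpr hε)

theorem tendsto_exp_neg_sq_div_atBot (hε : 0 < ε) :
    Tendsto (fun t : ℝ => exp (-t ^ 2 / ε)) atBot (𝓝 0) := by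
  refine tendsto_exp_atBot.comp (Tendsto.atBot_div_const hε ?_)
  simpa [sq] using (tendsto_id (α := ℝ)).atBot_mul_atBot₀ tendsto_id

theorem integral_Iio_exp_neg_sq_div (hε : 0 < ε) (x : ℝ) :
    ∫ t in Iio x, exp (-t ^ 2 / ε) = √ε * ∫ T in Iio (x / √ε), exp (-T ^ 2) := by
  have hsε : 0 < √ε := sqrt_pos.mpr hε
  have := integral_comp_mul_left_Iio (fun T => exp (-T ^ 2)) x (inv_pos.mpr hsε)
  rw [inv_inv, smul_eq_mul, inv_mul_eq_div] at this
  rw [← this]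
  refine setIntegral_congr_fun measurableSet_Iio fun t _ => ?_
  rw [mul_pow, inv_pow, sq_sqrt hε.le, neg_div, div_eq_inv_mul]

theorem integral_Iio_id_mul_exp_neg_sq_div_mul (hε : 0 < ε) {S : ℝ → ℝ}
    (hS : Differentiable ℝ S) {A B : ℝ} (hSA : ∀ t, |S t| ≤ A) (hSB : ∀ t, |deriv S t| ≤ B)
    (x : ℝ) :
    ∫ t in Iio x, t * exp (-t ^ 2 / ε) * S t
      = -(ε / 2) * exp (-x ^ 2 / ε) * S x + ε / 2 * ∫ t in Iio x, exp (-t ^ 2 / ε) * deriv S t := by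
  have hS_bdd : IsBoundedUnder (· ≤ ·) atBot (norm ∘ S) := isBoundedUnder_of ⟨A, fun t => hSA t⟩
  have hv_lim : Tendsto (fun t => -(ε / 2) * exp (-t ^ 2 / ε)) atBot (𝓝 0) := by
    simpa using (tendsto_exp_neg_sq_div_atBot hε).const_mul (-(ε / 2))
  have hparts := integral_Iic_mul_deriv_eq_deriv_mul (a := x) (u := S) (u' := deriv S)
    (fun t _ => (hS t).hasDerivAt) (fun t _ => hasDerivAt_neg_half_mul_exp_neg_sq_div hε.ne' t)
    ((integrable_id_mul_exp_neg_sq_div hε).bdd_mul hS.continuous.aestronglyMeasurable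
      (.of_forall hSA)).integrableOn
    (((integrable_exp_neg_sq_div hε).const_mul _).bdd_mul
      (measurable_deriv S).aestronglyMeasurable (.of_forall hSB)).integrableOn
    (((hS.continuous.mul (by fun_prop)).tendsto x).mono_left nhdsWithin_le_nhds)
    (isBoundedUnder_le_mul_tendsto_zero hS_bdd hv_lim)
  rw [integral_Iic_eq_integral_Iio, integral_Iic_eq_integral_Iio] at hparts
  have hlhs : ∫ t in Iio x, t * exp (-t ^ 2 / ε) * S t
      = ∫ t in Iio x, S t * (t * exp (-t ^ 2 / ε)) := by
    congr 1 with t; ring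
  have hrhs : ∫ t in Iio x, deriv S t * (-(ε / 2) * exp (-t ^ 2 / ε))
      = -(ε / 2) * ∫ t in Iio x, exp (-t ^ 2 / ε) * deriv S t := by
    rw [← integral_const_mul]; congr 1 with t; ring
  rw [hlhs, hparts, hrhs, Pi.mul_apply]
  ring

end Gaussian

/-- One integration by parts: for `g` of class `C²` with `g, g', g''` bounded,
`y⁻(x,ε) = g(0)√ε·U⁻(x/√ε) - (ε/2)·Sg(x)
  + (ε/2)·e^{x²/ε} ∫_{-∞}^x e^{-t²/ε} (Sg)'(t) dt`. -/
theorem yminus_integration_by_parts (g : ℝ → ℝ) (hg : ContDiff ℝ 2 g)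
    (M : ℝ) (hM : ∀ x, |g x| ≤ M ∧ |deriv g x| ≤ M ∧ |deriv (deriv g) x| ≤ M) :
    ∀ ε : ℝ, 0 < ε → ∀ x : ℝ,
      Real.exp (x ^ 2 / ε) * ∫ t in Set.Iio x, Real.exp (-t ^ 2 / ε) * g t
        = g 0 * Real.sqrt ε *
            (Real.exp ((x / Real.sqrt ε) ^ 2) *
              ∫ T in Set.Iio (x / Real.sqrt ε), Real.exp (-T ^ 2))
          - ε / 2 * Sop g x
          + ε / 2 *
            (Real.exp (x ^ 2 / ε) *
              ∫ t in Set.Iio x, Real.exp (-t ^ 2 / ε) * deriv (Sop g) t) := by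
  intro ε hε x
  have hS_diff : Differentiable ℝ (Sop g) := fun t => (hasDerivAt_Sop hg t).differentiableAt
  have hS_bound : ∀ t, |Sop g t| ≤ M := abs_Sop_le (hg.of_le one_le_two) fun t => (hM t).2.1
  have hsplit : ∀ t, exp (-t ^ 2 / ε) * g t
      = g 0 * exp (-t ^ 2 / ε) + t * exp (-t ^ 2 / ε) * Sop g t := fun t => by
    linear_combination exp (-t ^ 2 / ε) * (mul_Sop g t).symm
  have hexp : exp (x ^ 2 / ε) * exp (-x ^ 2 / ε) = 1 := by
    rw [← exp_add, neg_div, add_neg_cancel, exp_zero]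
  simp_rw [hsplit]
  rw [integral_add ((integrable_exp_neg_sq_div hε).const_mul _).integrableOn
      ((integrable_id_mul_exp_neg_sq_div hε).mul_bdd
        hS_diff.continuous.aestronglyMeasurable (.of_forall hS_bound)).integrableOn,
    integral_const_mul, integral_Iio_exp_neg_sq_div hε,
    integral_Iio_id_mul_exp_neg_sq_div_mul hε hS_diff hS_bound
      (abs_deriv_Sop_le hg fun t => (hM t).2.2),
    div_pow, sq_sqrt hε.le]
  linear_combination (-(ε / 2) * Sop g x) * hexp
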